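/- Let f be a relation on (X,d). If z satisfies m_d^f(z,z) = 0, then for all x,y ∈ X, m_d^f(x,y) ≤ max(m_d^f(x,z), m_d^f(z,y)). Consequently, the symmetrized function sm_d^f(x,y) = max(m_d^f(x,y), m_d^f(y,x)) restricted to |𝒞_d f| = {z : m_d^f(z,z)=0} is a pseudo-ultrametric. -/

import Mathlib

namespace ChainRec

variable {X : Type*}

/-- chain-length of a chain, with `x` the start point and `y` the end point.
For `c = [(a₁,b₁),…,(aₙ,bₙ)]` this is `d x a₁ + Σ d bᵢ a_{i+1} + d bₙ y`. -/
noncomputable def chainLen (d : X → X → ℝ) : X → X → List (X × X) → ℝ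
  | x, y, [] => d x y
  | x, y, p :: t => d x p.1 + chainLen d p.2 y t

/-- chain-bound of a chain: the max of all the gap distances. -/
noncomputable def chainBound (d : X → X → ℝ) : X → X → List (X × X) → ℝ
  | x, y, [] => d x y
  | x, y, p :: t => max (d x p.1) (chainBound d p.2 y t)

/-- The Aubry–Mather barrier function `ℓ_d^f`. -/
noncomputable def ell (d : X → X → ℝ) (f : Set (X × X)) (x y : X) : ℝ :=
  sInf { r | ∃ c : List (X × X), c ≠ [] ∧ (∀ p ∈ c, p ∈ f) ∧ r = chainLen d x y c }

/-- The Conley barrier function `m_d^f`. -/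
noncomputable def mbar (d : X → X → ℝ) (f : Set (X × X)) (x y : X) : ℝ :=
  sInf { r | ∃ c : List (X × X), c ≠ [] ∧ (∀ p ∈ c, p ∈ f) ∧ r = chainBound d x y c }

/-! Concatenating near-optimal chains `x → z`, `z → z` and `z → y` gives
`m(x, y) ≤ max (m(x, z), m(z, y)) + m(z, z)`: the triangle inequality through `z` bounds each
junction gap by a gap of the loop at `z` plus a gap of the adjacent chain. For `m(z, z) = 0` this
is the ultrametric inequality, and the symmetrized one follows by applying it in both directions. -/

section Chains

variable {d : X → X → ℝ}

theorem chainBound_nonneg (hd : ∀ x y, 0 ≤ d x y) :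
    ∀ (x y : X) (c : List (X × X)), 0 ≤ chainBound d x y c
  | x, y, [] => hd x y
  | x, _, p :: _ => (hd x p.1).trans (le_max_left _ _)

theorem dist_le_chainBound_cons (x y : X) (q : X × X) (t : List (X × X)) :
    d x q.1 ≤ chainBound d x y (q :: t) :=
  le_max_left _ _

theorem chainBound_append_cons_le (hd : ∀ x y, 0 ≤ d x y)
    (htri : ∀ x y z, d x z ≤ d x y + d y z) (y z : X) (q : X × X) (t : List (X × X)) :
    ∀ (x : X) (c₁ : List (X × X)),
      chainBound d x y (c₁ ++ q :: t) ≤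
        max (chainBound d x z c₁ + d z q.1) (chainBound d z y (q :: t))
  | x, [] => by
      rw [List.nil_append, chainBound, chainBound]
      exact max_le (le_max_of_le_left (htri x z q.1)) (le_max_of_le_right (le_max_right _ _))
  | x, p :: c₁ => by
      rw [List.cons_append, chainBound, chainBound]
      refine max_le ?_ ((chainBound_append_cons_le hd htri y z q t p.2 c₁).trans ?_)
      · exact le_max_of_le_left (le_add_of_le_of_nonneg (le_max_left _ _) (hd z q.1))
      · gcongr
        exact le_max_right _ _

theorem chainBound_append_append_le (hd : ∀ x y, 0 ≤ d x y)
    (htri : ∀ x y z, d x z ≤ d x y + d y z) (x y z : X) (c₁ : List (X × X))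
    {c c₂ : List (X × X)} (hc : c ≠ []) (hc₂ : c₂ ≠ []) :
    chainBound d x y (c₁ ++ c ++ c₂) ≤
      max (chainBound d x z c₁) (chainBound d z y c₂) + chainBound d z z c := by
  obtain ⟨q, t, rfl⟩ := List.exists_cons_of_ne_nil hc
  obtain ⟨q₂, t₂, rfl⟩ := List.exists_cons_of_ne_nil hc₂
  set B₁ := chainBound d x z c₁
  set B := chainBound d z z (q :: t)
  set B₂ := chainBound d z y (q₂ :: t₂)
  have hB : 0 ≤ B := chainBound_nonneg hd _ _ _
  have hq : d z q.1 ≤ B := dist_le_chainBound_cons _ _ _ _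
  have hq₂ : d z q₂.1 ≤ B₂ := dist_le_chainBound_cons _ _ _ _
  have hloop : chainBound d z y ((q :: t) ++ q₂ :: t₂) ≤ max (B + d z q₂.1) B₂ :=
    chainBound_append_cons_le hd htri y z q₂ t₂ z (q :: t)
  rw [List.append_assoc, List.cons_append]
  calc chainBound d x y (c₁ ++ q :: (t ++ q₂ :: t₂))
      ≤ max (B₁ + d z q.1) (chainBound d z y ((q :: t) ++ q₂ :: t₂)) :=
        chainBound_append_cons_le hd htri y z q _ x c₁
    _ ≤ max (B₁ + B) (max (B + B₂) B₂) := by gcongr; exact hloop.trans (by gcongr)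
    _ ≤ max B₁ B₂ + B := by
        have := le_max_left B₁ B₂
        have := le_max_right B₁ B₂
        exact max_le (by linarith) (max_le (by linarith) (by linarith))

end Chains

section Barrier

variable {d : X → X → ℝ} {f : Set (X × X)}

theorem mbar_of_empty (x y : X) : mbar d ∅ x y = 0 := by
  suffices h : { r | ∃ c : List (X × X), c ≠ [] ∧ (∀ p ∈ c, p ∈ (∅ : Set (X × X))) ∧
      r = chainBound d x y c } = ∅ by
    rw [mbar, h, Real.sInf_empty]
  refine Set.eq_empty_of_forall_notMem ?_
  rintro r ⟨c, hc, hcf, -⟩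
  obtain ⟨q, t, rfl⟩ := List.exists_cons_of_ne_nil hc
  exact hcf q List.mem_cons_self

theorem mbar_le_chainBound (hd : ∀ x y, 0 ≤ d x y) {x y : X} {c : List (X × X)}
    (hc : c ≠ []) (hcf : ∀ p ∈ c, p ∈ f) : mbar d f x y ≤ chainBound d x y c := by
  refine csInf_le ⟨0, ?_⟩ ⟨c, hc, hcf, rfl⟩
  rintro r ⟨c', -, -, rfl⟩
  exact chainBound_nonneg hd x y c'

theorem exists_chainBound_lt_of_mbar_lt (hf : f.Nonempty) {x y : X} {r : ℝ}
    (h : mbar d f x y < r) :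
    ∃ c : List (X × X), c ≠ [] ∧ (∀ p ∈ c, p ∈ f) ∧ chainBound d x y c < r := by
  obtain ⟨p, hp⟩ := hf
  obtain ⟨_, ⟨c, hc, hcf, rfl⟩, hlt⟩ :=
    exists_lt_of_csInf_lt (by exact ⟨_, [p], List.cons_ne_nil _ _, by simpa using hp, rfl⟩) h
  exact ⟨c, hc, hcf, hlt⟩

theorem mbar_le_max_add_mbar (hd : ∀ x y, 0 ≤ d x y)
    (htri : ∀ x y z, d x z ≤ d x y + d y z) (x y z : X) :
    mbar d f x y ≤ max (mbar d f x z) (mbar d f z y) + mbar d f z z := by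
  rcases f.eq_empty_or_nonempty with rfl | hf
  · simp only [mbar_of_empty, max_self, add_zero, le_refl]
  refine le_of_forall_pos_lt_add fun ε hε => ?_
  have hε' : 0 < ε / 3 := by positivity
  obtain ⟨c₁, -, hc₁f, hc₁⟩ :=
    exists_chainBound_lt_of_mbar_lt hf (lt_add_of_pos_right (mbar d f x z) hε')
  obtain ⟨c, hc, hcf, hcb⟩ :=
    exists_chainBound_lt_of_mbar_lt hf (lt_add_of_pos_right (mbar d f z z) hε')
  obtain ⟨c₂, hc₂, hc₂f, hc₂b⟩ :=
    exists_chainBound_lt_of_mbar_lt hf (lt_add_of_pos_right (mbar d f z y) hε')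
  have hchain : ∀ p ∈ c₁ ++ c ++ c₂, p ∈ f := by
    simp only [List.mem_append]
    rintro p ((hp | hp) | hp)
    exacts [hc₁f p hp, hcf p hp, hc₂f p hp]
  have hmax : max (chainBound d x z c₁) (chainBound d z y c₂) <
      max (mbar d f x z) (mbar d f z y) + ε / 3 :=
    max_lt (hc₁.trans_le (by gcongr; exact le_max_left _ _))
      (hc₂b.trans_le (by gcongr; exact le_max_right _ _))
  calc mbar d f x y ≤ chainBound d x y (c₁ ++ c ++ c₂) :=
        mbar_le_chainBound hd (by simp [hc₂]) hchain
    _ ≤ max (chainBound d x z c₁) (chainBound d z y c₂) + chainBound d z z c :=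
        chainBound_append_append_le hd htri x y z c₁ hc hc₂
    _ < max (mbar d f x z) (mbar d f z y) + mbar d f z z + ε := by linarith

end Barrier

theorem smbar_ultrametric_general (d : X → X → ℝ) (f : Set (X × X))
    (hrefl : ∀ x, d x x = 0) (hsymm : ∀ x y, d x y = d y x)
    (htri : ∀ x y z, d x z ≤ d x y + d y z)
    :
    (∀ x y z, mbar d f z z = 0 → mbar d f x y ≤ max (mbar d f x z) (mbar d f z y)) ∧
    (∀ x, mbar d f x x = 0 → max (mbar d f x x) (mbar d f x x) = 0) ∧
    (∀ x y, max (mbar d f x y) (mbar d f y x) = max (mbar d f y x) (mbar d f x y)) ∧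
    (∀ x y z, mbar d f x x = 0 → mbar d f y y = 0 → mbar d f z z = 0 →
      max (mbar d f x y) (mbar d f y x) ≤
        max (max (mbar d f x z) (mbar d f z x)) (max (mbar d f z y) (mbar d f y z))) := by
  have hd : ∀ x y, 0 ≤ d x y := fun x y => by
    have := htri x y x
    rw [hrefl, hsymm y x] at this
    linarith
  have hult : ∀ x y z, mbar d f z z = 0 → mbar d f x y ≤ max (mbar d f x z) (mbar d f z y) :=
    fun x y z hz => by simpa [hz] using mbar_le_max_add_mbar (f := f) hd htri x y z
  refine ⟨hult, fun x hx => by rw [hx, max_self], fun x y => max_comm _ _, ?_⟩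
  intro x y z _ _ hz
  exact max_le ((hult x y z hz).trans (max_le_max (le_max_left _ _) (le_max_left _ _)))
    ((hult y x z hz).trans
      (max_le (le_max_of_le_right (le_max_right _ _)) (le_max_of_le_left (le_max_right _ _))))

theorem smbar_ultrametric [Nonempty X] (d : X → X → ℝ) (f : Set (X × X))
    (hrefl : ∀ x, d x x = 0) (hsymm : ∀ x y, d x y = d y x)
    (htri : ∀ x y z, d x z ≤ d x y + d y z)
    (hbdd : ∃ C, ∀ x y, d x y ≤ C)
    :
    (∀ x y z, mbar d f z z = 0 → mbar d f x y ≤ max (mbar d f x z) (mbar d f z y)) ∧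
    (∀ x, mbar d f x x = 0 → max (mbar d f x x) (mbar d f x x) = 0) ∧
    (∀ x y, max (mbar d f x y) (mbar d f y x) = max (mbar d f y x) (mbar d f x y)) ∧
    (∀ x y z, mbar d f x x = 0 → mbar d f y y = 0 → mbar d f z z = 0 →
      max (mbar d f x y) (mbar d f y x) ≤
        max (max (mbar d f x z) (mbar d f z x)) (max (mbar d f z y) (mbar d f y z))) :=
  smbar_ultrametric_general d f hrefl hsymm htri

end ChainRec
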